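/- arXiv:1804.05227 — 2 statements merged into one kernel-verified Lean document; each statement's English description precedes it below -/
import Mathlib

section
/- Let f, g : ℝ → ℝ be bounded measurable with i[f(P), g(Q)] a positive operator. Let I ⊆ ℝ be an open interval containing the closure of the essential range of f (the essential range being the set of c ∈ ℝ such that f⁻¹(U) has positive Lebesgue measure for every neighborhood U of c). Let Φ : I → ℝ be continuous and operator monotone on I in the following sense: for all bounded self-adjoint operators A, B on L²(ℝ) with spectra contained in I and with B − A positive, the operator Φ(B) − Φ(A) is positive, where Φ(A), Φ(B) are defined by the continuous functional calculus. Then i[(Φ∘f)(P), g(Q)] is a positive operator. -/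
open MeasureTheory Complex Real Filter Set
open scoped ComplexOrder

noncomputable section

abbrev L2 : Type := MeasureTheory.Lp ℂ 2 (MeasureTheory.volume : MeasureTheory.Measure ℝ)

/-- `U` is the Fourier–Plancherel transform: the unitary on `L²(ℝ)` that agrees with the
Fourier integral `ξ ↦ (2π)^{-1/2} ∫ e^{-iξx} φ(x) dx` on integrable functions. -/
def IsFourierPlancherel (U : L2 ≃ₗᵢ[ℂ] L2) : Prop :=
  ∀ φ : L2, MeasureTheory.Integrable (φ : ℝ → ℂ) MeasureTheory.volume →
    (U φ : ℝ → ℂ) =ᵐ[MeasureTheory.volume]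
      fun ξ : ℝ => (Real.sqrt (2 * Real.pi) : ℂ)⁻¹ *
        ∫ x : ℝ, Complex.exp (-(Complex.I * ξ * x)) * (φ : ℝ → ℂ) x

/-- `T` is the operator of multiplication by (the complexification of) `h` on `L²(ℝ)`. -/
def IsMulOp (h : ℝ → ℝ) (T : L2 →L[ℂ] L2) : Prop :=
  ∀ ψ : L2, (T ψ : ℝ → ℂ) =ᵐ[MeasureTheory.volume]
    fun x => (h x : ℂ) * (ψ : ℝ → ℂ) x

/-- Conjugation by the Fourier transform: `Mf ↦ U⁻¹ ∘ Mf ∘ U`; if `Mf = M_f` this is `f(P)`. -/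
def conjF (U : L2 ≃ₗᵢ[ℂ] L2) (T : L2 →L[ℂ] L2) : L2 →L[ℂ] L2 :=
  ((U.symm.toLinearIsometry.toContinuousLinearMap).comp T).comp
    U.toLinearIsometry.toContinuousLinearMap

/-- The commutator `i[f(P), g(Q)] = i (f(P) g(Q) - g(Q) f(P))`, where `f(P) = U⁻¹ Mf U`. -/
def commOp (U : L2 ≃ₗᵢ[ℂ] L2) (Mf Mg : L2 →L[ℂ] L2) : L2 →L[ℂ] L2 :=
  Complex.I • ((conjF U Mf).comp Mg - Mg.comp (conjF U Mf))

/-- A bounded operator is positive if `⟨ψ, Cψ⟩ ≥ 0` for all `ψ`. -/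
def IsPosOp (C : L2 →L[ℂ] L2) : Prop :=
  ∀ ψ : L2, 0 ≤ (inner ℂ ψ (C ψ) : ℂ)

/-- The Kato class `K_a`. -/
def KatoClass (a : ℝ) (f : ℝ → ℝ) : Prop :=
  ∃ F : ℂ → ℂ,
    DifferentiableOn ℂ F {z : ℂ | |z.im| < a} ∧
    (∃ M : ℝ, ∀ z ∈ {z : ℂ | |z.im| < a}, ‖F z‖ ≤ M) ∧
    (∀ᵐ x : ℝ, F (x : ℂ) = (f x : ℂ)) ∧
    (∀ z ∈ {z : ℂ | |z.im| < a}, 0 ≤ (F z).im * z.im)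

/-- The Lebesgue–Stieltjes measure of a bounded monotone right-continuous function
(junk value `0` otherwise). -/
def lsMeasure (f : ℝ → ℝ) : MeasureTheory.Measure ℝ := by
  classical
  exact if h : Monotone f ∧ ∀ x, ContinuousWithinAt f (Set.Ici x) x then
    StieltjesFunction.measure ⟨f, h.1, h.2⟩ else 0

/-- The Fourier–Stieltjes transform `F_f(u) = (2π)^{-1/2} ∫ e^{-iut} dμ_f(t)`. -/
def FST (f : ℝ → ℝ) (u : ℝ) : ℂ :=
  (Real.sqrt (2 * Real.pi) : ℂ)⁻¹ *
    ∫ t : ℝ, Complex.exp (-(Complex.I * u * t)) ∂(lsMeasure f)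

/-!
Let `A := f(P)` and `G := g(Q)`, and move `A` along the unitary group generated by `G`:
`A_t := e^{itG} A e^{-itG}`. Its derivative is `-e^{itG} i[A, G] e^{-itG}`, so `i[A, G] ≥ 0`
exactly when `t ↦ A_t` is decreasing in the Loewner order. Each `A_t` is unitarily equivalent
to `A`, so its spectrum lies in `I` and `Φ(A_t) = e^{itG} Φ(A) e^{-itG}`. Operator monotonicity
of `Φ` then makes `t ↦ Φ(A)_t` decreasing too, that is, `i[Φ(A), G] ≥ 0`. Finally
`Φ(f(P)) = (Φ ∘ f)(P)`, because the spectrum of the multiplication operator `M_f` is the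
essential range of `f`, and the functional calculus of `M_f` is multiplication by `Φ ∘ f`.
-/

open NormedSpace selfAdjoint Unitary

section CStarAlgebra
variable {A : Type*} [CStarAlgebra A]

theorem isSelfAdjoint_I_smul_commutator {a b : A} (ha : IsSelfAdjoint a) (hb : IsSelfAdjoint b) :
    IsSelfAdjoint (I • (a * b - b * a)) := by
  rw [IsSelfAdjoint, star_smul, star_sub, star_mul, star_mul, ha.star_eq, hb.star_eq, star_def,
    conj_I, neg_smul, ← smul_neg, neg_sub]

theorem hasDerivAt_conj_expUnitary (G : selfAdjoint A) (a : A) (t : ℝ) :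
    HasDerivAt (fun s : ℝ => conjStarAlgAut ℂ A (expUnitary (s • G)) a)
      (-conjStarAlgAut ℂ A (expUnitary (t • G)) (I • (a * G - G * a))) t := by
  set X : A := I • (G : A)
  have hexp : ∀ s : ℝ, (expUnitary (s • G) : A) = exp (s • X) := fun s => by
    simp only [expUnitary_coe, selfAdjoint.val_smul, X, smul_comm (s : ℝ) I]
  have hstar : ∀ s : ℝ, star (exp (s • X)) = exp (s • -X) := fun s => by
    rw [star_exp, star_smul, star_trivial, star_smul, (G.prop : IsSelfAdjoint (G : A)).star_eq,
      star_def, conj_I, neg_smul]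
  have hX : X * a - a * X = -(I • (a * G - G * a)) := by
    simp only [X, smul_mul_assoc, mul_smul_comm, smul_sub, neg_sub]
  simp only [conjStarAlgAut_apply, hexp, hstar]
  convert ((hasDerivAt_exp_smul_const (𝕂 := ℝ) X t).mul_const a).mul
    (hasDerivAt_exp_smul_const' (𝕂 := ℝ) (-X) t) using 1
  · rfl
  · rw [← neg_mul, ← mul_neg, ← hX]
    noncomm_ring

end CStarAlgebra

theorem StarAlgEquiv.spectrum_real_apply {A B : Type*} [Ring A] [Ring B] [Algebra ℂ A]
    [Algebra ℂ B] [Star A] [Star B] (e : A ≃⋆ₐ[ℂ] B) (a : A) :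
    spectrum ℝ (e a) = spectrum ℝ a :=
  AlgEquiv.spectrum_eq (e.toAlgEquiv.restrictScalars ℝ) a

def OperatorMonotoneOn (A : Type*) [CStarAlgebra A] [PartialOrder A] (Φ : ℝ → ℝ) (s : Set ℝ) :
    Prop :=
  ∀ a b : A, IsSelfAdjoint a → IsSelfAdjoint b → spectrum ℝ a ⊆ s → spectrum ℝ b ⊆ s → a ≤ b →
    cfc Φ a ≤ cfc Φ b

theorem ContinuousLinearMap.le_iff_re_inner_le {𝕜 H : Type*} [RCLike 𝕜] [NormedAddCommGroup H]
    [InnerProductSpace 𝕜 H] [CompleteSpace H] {S T : H →L[𝕜] H} (hS : IsSelfAdjoint S)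
    (hT : IsSelfAdjoint T) :
    S ≤ T ↔ ∀ x, RCLike.re (inner 𝕜 (S x) x) ≤ RCLike.re (inner 𝕜 (T x) x) := by
  simp only [le_def, isPositive_def', hT.sub hS, true_and, reApplyInnerSelf, sub_apply,
    inner_sub_left, map_sub, sub_nonneg]

theorem ContinuousLinearMap.not_isUnit_of_forall_exists_norm_apply_le {𝕜 E : Type*}
    [NontriviallyNormedField 𝕜] [NormedAddCommGroup E] [NormedSpace 𝕜 E] {T : E →L[𝕜] E}
    (h : ∀ ε > 0, ∃ x ≠ 0, ‖T x‖ ≤ ε * ‖x‖) : ¬IsUnit T := by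
  rintro ⟨u, rfl⟩
  set B := (↑u⁻¹ : E →L[𝕜] E)
  obtain ⟨x, hx, hux⟩ := h (‖B‖ + 1)⁻¹ (by positivity)
  have hx' : 0 < ‖x‖ := norm_pos_iff.2 hx
  have hle : ‖x‖ ≤ ‖B‖ / (‖B‖ + 1) * ‖x‖ := calc
    ‖x‖ = ‖B ((u : E →L[𝕜] E) x)‖ := by rw [← mul_apply_eq_comp, u.inv_mul]; rfl
    _ ≤ ‖B‖ * ‖(u : E →L[𝕜] E) x‖ := B.le_opNorm _
    _ ≤ ‖B‖ * ((‖B‖ + 1)⁻¹ * ‖x‖) := by gcongr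
    _ = ‖B‖ / (‖B‖ + 1) * ‖x‖ := by ring
  have hlt : ‖B‖ / (‖B‖ + 1) < 1 := (div_lt_one (by positivity)).2 (lt_add_one _)
  nlinarith

section Hilbert
variable {H : Type*} [NormedAddCommGroup H] [InnerProductSpace ℂ H] [CompleteSpace H]

theorem hasDerivAt_re_inner_conj_expUnitary (G : selfAdjoint (H →L[ℂ] H)) (a : H →L[ℂ] H)
    (x : H) (t : ℝ) :
    HasDerivAt (fun s : ℝ => re (inner ℂ (conjStarAlgAut ℂ _ (expUnitary (s • G)) a x) x))
      (-re (inner ℂ (conjStarAlgAut ℂ _ (expUnitary (t • G)) (I • (a * G - G * a)) x) x)) t := by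
  let L : (H →L[ℂ] H) →L[ℝ] ℝ :=
    reCLM.comp (((innerSL ℂ x).comp (ContinuousLinearMap.apply ℂ H x)).restrictScalars ℝ)
  have hL : ∀ T : H →L[ℂ] H, L T = re (inner ℂ (T x) x) := fun T => inner_re_symm (𝕜 := ℂ) x (T x)
  have h := L.hasFDerivAt.comp_hasDerivAt t (hasDerivAt_conj_expUnitary G a t)
  rw [map_neg, hL] at h
  simpa only [Function.comp_def, hL] using h

theorem commutator_nonneg_iff_antitone_conj_expUnitary (G : selfAdjoint (H →L[ℂ] H))
    {a : H →L[ℂ] H} (ha : IsSelfAdjoint a) :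
    0 ≤ I • (a * G - G * a) ↔ Antitone fun t : ℝ => conjStarAlgAut ℂ _ (expUnitary (t • G)) a := by
  have hconj : ∀ t : ℝ, IsSelfAdjoint (conjStarAlgAut ℂ _ (expUnitary (t • G)) a) :=
    fun t => ha.map _
  constructor
  · intro hC s t hst
    rw [ContinuousLinearMap.le_iff_re_inner_le (hconj t) (hconj s)]
    intro x
    refine antitone_of_hasDerivAt_nonpos (hasDerivAt_re_inner_conj_expUnitary G a x)
      (fun t => neg_nonpos.mpr ?_) hst
    exact ContinuousLinearMap.IsPositive.re_inner_nonneg_left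
      ((ContinuousLinearMap.nonneg_iff_isPositive _).1 (star_right_conjugate_nonneg hC _)) x
  · intro hanti
    rw [ContinuousLinearMap.nonneg_iff_isPositive, ContinuousLinearMap.isPositive_def']
    refine ⟨isSelfAdjoint_I_smul_commutator ha G.prop, fun x => ?_⟩
    have hderiv := (hasDerivAt_re_inner_conj_expUnitary G a x 0).nonpos_of_antitone
      fun s t hst => (ContinuousLinearMap.le_iff_re_inner_le (hconj t) (hconj s)).1 (hanti hst) x
    have hG0 : (0 : ℝ) • G = 0 := Subtype.ext (by rw [selfAdjoint.val_smul, zero_smul]; rfl)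
    rw [hG0, expUnitary_zero, map_one] at hderiv
    exact neg_nonpos.mp hderiv

theorem commutator_cfc_nonneg_of_operatorMonotoneOn (G : selfAdjoint (H →L[ℂ] H)) {a : H →L[ℂ] H}
    (ha : IsSelfAdjoint a) (hC : 0 ≤ I • (a * G - G * a)) {s : Set ℝ} (hspec : spectrum ℝ a ⊆ s)
    {Φ : ℝ → ℝ} (hΦc : ContinuousOn Φ s) (hΦ : OperatorMonotoneOn (H →L[ℂ] H) Φ s) :
    0 ≤ I • (cfc Φ a * G - G * cfc Φ a) := by
  let conj : ℝ → (H →L[ℂ] H) ≃⋆ₐ[ℂ] (H →L[ℂ] H) := fun t => conjStarAlgAut ℂ _ (expUnitary (t • G))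
  have hmap : ∀ t, conj t (cfc Φ a) = cfc Φ (conj t a) := fun t =>
    StarAlgHomClass.map_cfc (conj t) Φ a (hΦc.mono hspec)
  have hspec' : ∀ t, spectrum ℝ (conj t a) ⊆ s := fun t => by
    rw [StarAlgEquiv.spectrum_real_apply]; exact hspec
  rw [commutator_nonneg_iff_antitone_conj_expUnitary G IsSelfAdjoint.cfc]
  intro t₁ t₂ ht
  change conj t₂ (cfc Φ a) ≤ conj t₁ (cfc Φ a)
  rw [hmap, hmap]
  exact hΦ _ _ (ha.map _) (ha.map _) (hspec' t₂) (hspec' t₁)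
    ((commutator_nonneg_iff_antitone_conj_expUnitary G ha).1 hC ht)

end Hilbert

theorem exists_measurable_ae_eq_subtype {α β : Type*} [MeasurableSpace α] [MeasurableSpace β]
    {μ : Measure α} {f : α → β} (hf : Measurable f) {s : Set β} (hs : MeasurableSet s)
    (hne : s.Nonempty) (hfs : ∀ᵐ x ∂μ, f x ∈ s) :
    ∃ r : α → s, Measurable r ∧ ∀ᵐ x ∂μ, (r x : β) = f x := by
  classical
  obtain ⟨y, hy⟩ := hne
  have hmem : ∀ x, (if f x ∈ s then f x else y) ∈ s := fun x => by split_ifs <;> assumption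
  refine ⟨fun x => ⟨_, hmem x⟩, (Measurable.ite (hf hs) hf measurable_const).subtype_mk, ?_⟩
  filter_upwards [hfs] with x hx
  simp [hx]

theorem essRange_eq_support {f : ℝ → ℝ} (hf : Measurable f) :
    {c : ℝ | ∀ ε > 0, 0 < volume (f ⁻¹' Ioo (c - ε) (c + ε))} = (volume.map f).support := by
  ext c
  rw [(nhds_basis_Ioo_pos c).mem_measureSupport]
  exact forall₂_congr fun ε _ => by rw [Measure.map_apply hf measurableSet_Ioo]

theorem isPosOp_iff_nonneg (C : L2 →L[ℂ] L2) : IsPosOp C ↔ 0 ≤ C := by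
  rw [ContinuousLinearMap.nonneg_iff_isPositive, ContinuousLinearMap.isPositive_iff_complex,
    IsPosOp]
  refine forall_congr' fun ψ => ?_
  rw [← inner_conj_symm, Complex.nonneg_iff]
  simp only [conj_re, conj_im, RCLike.re_to_complex, Complex.ext_iff, ofReal_re, ofReal_im]
  constructor
  · rintro ⟨h1, h2⟩; exact ⟨⟨trivial, by linarith⟩, h1⟩
  · rintro ⟨⟨-, h1⟩, h2⟩; exact ⟨h2, by linarith⟩

-- Instance search does not find this for `L2` by itself.
instance : ContinuousFunctionalCalculus ℝ (L2 →L[ℂ] L2) IsSelfAdjoint :=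
  IsSelfAdjoint.instContinuousFunctionalCalculus

def mulOp (h : ℝ → ℝ) (hh : MemLp (fun x => (h x : ℂ)) ⊤ volume) : L2 →L[ℂ] L2 :=
  (ContinuousLinearMap.mul ℂ ℂ).holderL volume ⊤ 2 2 (hh.toLp _)

theorem isMulOp_mulOp (h : ℝ → ℝ) (hh : MemLp (fun x => (h x : ℂ)) ⊤ volume) :
    IsMulOp h (mulOp h hh) := fun ψ => by
  filter_upwards [(ContinuousLinearMap.mul ℂ ℂ).coeFn_holder (r := 2) (hh.toLp _) ψ,
    hh.coeFn_toLp] with x hx hx'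
  simp [mulOp, hx, hx']

theorem isMulOp_algebraMap (r : ℝ) : IsMulOp (fun _ => r) (algebraMap ℝ (L2 →L[ℂ] L2) r) :=
  fun ψ => by
    rw [Algebra.algebraMap_eq_smul_one]
    filter_upwards [Lp.coeFn_smul r ψ] with x hx
    simp [hx, Complex.real_smul]

namespace IsMulOp
variable {h h' f : ℝ → ℝ} {T T' Mf : L2 →L[ℂ] L2}

theorem eq_of_ae_eq (hT : IsMulOp h T) (hT' : IsMulOp h' T') (hh : h =ᵐ[volume] h') : T = T' :=
  ContinuousLinearMap.ext fun ψ => Lp.ext <| by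
    filter_upwards [hT ψ, hT' ψ, hh] with x h1 h2 h3
    rw [h1, h2, h3]

theorem add (hT : IsMulOp h T) (hT' : IsMulOp h' T') : IsMulOp (h + h') (T + T') := fun ψ => by
  filter_upwards [hT ψ, hT' ψ, Lp.coeFn_add (T ψ) (T' ψ)] with x h1 h2 h3
  simp only [add_apply, h3, Pi.add_apply, h1, h2, ofReal_add, add_mul]

theorem sub (hT : IsMulOp h T) (hT' : IsMulOp h' T') : IsMulOp (h - h') (T - T') := fun ψ => by
  filter_upwards [hT ψ, hT' ψ, Lp.coeFn_sub (T ψ) (T' ψ)] with x h1 h2 h3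
  simp only [sub_apply, h3, Pi.sub_apply, h1, h2, ofReal_sub, sub_mul]

theorem mul (hT : IsMulOp h T) (hT' : IsMulOp h' T') : IsMulOp (h * h') (T * T') := fun ψ => by
  filter_upwards [hT (T' ψ), hT' ψ] with x h1 h2
  simp only [mul_apply_eq_comp, h1, h2, Pi.mul_apply, ofReal_mul, mul_assoc]

theorem isSelfAdjoint (hT : IsMulOp h T) : IsSelfAdjoint T := by
  rw [ContinuousLinearMap.isSelfAdjoint_iff_isSymmetric]
  intro ψ φ
  simp only [ContinuousLinearMap.coe_coe, L2.inner_def]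
  refine integral_congr_ae ?_
  filter_upwards [hT ψ, hT φ] with x h1 h2
  simp only [RCLike.inner_apply, h1, h2, map_mul, conj_ofReal]
  ring

theorem norm_le (hT : IsMulOp h T) {C : ℝ} (hC0 : 0 ≤ C) (hC : ∀ᵐ x, |h x| ≤ C) : ‖T‖ ≤ C :=
  T.opNorm_le_bound hC0 fun ψ => Lp.norm_le_mul_norm_of_ae_le_mul <| by
    filter_upwards [hT ψ, hC] with x h1 h2
    rw [h1, norm_mul, norm_real, Real.norm_eq_abs]
    gcongr

theorem isUnit (hT : IsMulOp h T) (hm : Measurable h) {ε : ℝ} (hε : 0 < ε)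
    (hb : ∀ᵐ x, ε ≤ |h x|) : IsUnit T := by
  have hinv : MemLp (fun x => ((h x)⁻¹ : ℝ) : ℝ → ℂ) ⊤ volume := by
    refine memLp_top_of_bound (by fun_prop) ε⁻¹ ?_
    filter_upwards [hb] with x hx
    rw [norm_real, Real.norm_eq_abs, abs_inv]
    exact inv_anti₀ hε hx
  have hne : ∀ᵐ x, h x ≠ 0 := hb.mono fun x hx h0 => by
    rw [h0, abs_zero] at hx; linarith
  refine isUnit_iff_exists.2 ⟨mulOp _ hinv, ?_, ?_⟩ <;> rw [← map_one (algebraMap ℝ _)]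
  · refine (hT.mul (isMulOp_mulOp _ hinv)).eq_of_ae_eq (isMulOp_algebraMap 1) ?_
    filter_upwards [hne] with x hx using mul_inv_cancel₀ hx
  · refine ((isMulOp_mulOp _ hinv).mul hT).eq_of_ae_eq (isMulOp_algebraMap 1) ?_
    filter_upwards [hne] with x hx using inv_mul_cancel₀ hx

theorem spectrum_subset_support (hMf : IsMulOp f Mf) (hf : Measurable f) :
    spectrum ℝ Mf ⊆ (volume.map f).support := by
  intro r hr
  by_contra hsupp
  obtain ⟨U, hU, hU0⟩ := Measure.notMem_support_iff_exists.1 hsupp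
  obtain ⟨ε, hε, hball⟩ := Metric.mem_nhds_iff.1 hU
  have hfU : ∀ᵐ x, f x ∉ U := measure_eq_zero_iff_ae_notMem.1 <|
    nonpos_iff_eq_zero.1 ((Measure.le_map_apply hf.aemeasurable U).trans hU0.le)
  refine spectrum.mem_iff.1 hr (((isMulOp_algebraMap r).sub hMf).isUnit
    (measurable_const.sub hf) hε ?_)
  filter_upwards [hfU] with x hx
  by_contra! hlt
  exact hx (hball (by rwa [Metric.mem_ball, Real.dist_eq, abs_sub_comm]))

theorem support_subset_spectrum (hMf : IsMulOp f Mf) (hf : Measurable f) :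
    (volume.map f).support ⊆ spectrum ℝ Mf := by
  intro c hc
  rw [spectrum.mem_iff]
  refine ContinuousLinearMap.not_isUnit_of_forall_exists_norm_apply_le fun ε hε => ?_
  rw [← essRange_eq_support hf] at hc
  obtain ⟨t, htm, hts, htpos, htfin⟩ :=
    Measure.exists_subset_measure_lt_top (hf measurableSet_Ioo) (hc ε hε)
  set ψ : L2 := indicatorConstLp 2 htm htfin.ne (1 : ℂ)
  refine ⟨ψ, ?_, Lp.norm_le_mul_norm_of_ae_le_mul ?_⟩
  · rw [← norm_pos_iff, norm_indicatorConstLp two_ne_zero ENNReal.ofNat_ne_top, norm_one, one_mul]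
    exact Real.rpow_pos_of_pos (ENNReal.toReal_pos htpos.ne' htfin.ne) _
  · filter_upwards [((isMulOp_algebraMap c).sub hMf) ψ,
      indicatorConstLp_coeFn (p := 2) (hs := htm) (hμs := htfin.ne) (c := (1 : ℂ))] with x h1 h2
    rw [h1, h2, norm_mul]
    by_cases hx : x ∈ t
    · have hfx := hts hx
      rw [Set.mem_preimage, Set.mem_Ioo] at hfx
      gcongr
      rw [Pi.sub_apply, norm_real, Real.norm_eq_abs, abs_le]
      constructor <;> linarith
    · simp [Set.indicator_of_notMem hx]

theorem spectrum_eq_support (hMf : IsMulOp f Mf) (hf : Measurable f) :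
    spectrum ℝ Mf = (volume.map f).support :=
  (hMf.spectrum_subset_support hf).antisymm (hMf.support_subset_spectrum hf)

end IsMulOp

section MulStarAlgHom
variable {X : Type*} [TopologicalSpace X] [CompactSpace X] [MeasurableSpace X]
  [OpensMeasurableSpace X] {r : ℝ → X} (hr : Measurable r)

include hr in
theorem ContinuousMap.memLp_top_ofReal_comp (φ : C(X, ℝ)) :
    MemLp (fun x => (φ (r x) : ℂ)) ⊤ volume :=
  memLp_top_of_bound
    (Complex.measurable_ofReal.comp (φ.continuous.measurable.comp hr)).aestronglyMeasurable ‖φ‖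
    (ae_of_all _ fun x => by rw [norm_real]; exact φ.norm_coe_le_norm (r x))

def mulStarAlgHom : C(X, ℝ) →⋆ₐ[ℝ] (L2 →L[ℂ] L2) where
  toFun φ := mulOp _ (φ.memLp_top_ofReal_comp hr)
  map_one' := (isMulOp_mulOp _ _).eq_of_ae_eq
    (map_one (algebraMap ℝ (L2 →L[ℂ] L2)) ▸ isMulOp_algebraMap 1) (ae_of_all _ fun _ => rfl)
  map_mul' _ _ := (isMulOp_mulOp _ _).eq_of_ae_eq ((isMulOp_mulOp _ _).mul (isMulOp_mulOp _ _))
    (ae_of_all _ fun _ => rfl)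
  map_zero' := (isMulOp_mulOp _ _).eq_of_ae_eq
    (map_zero (algebraMap ℝ (L2 →L[ℂ] L2)) ▸ isMulOp_algebraMap 0) (ae_of_all _ fun _ => rfl)
  map_add' _ _ := (isMulOp_mulOp _ _).eq_of_ae_eq ((isMulOp_mulOp _ _).add (isMulOp_mulOp _ _))
    (ae_of_all _ fun _ => rfl)
  commutes' c := (isMulOp_mulOp _ _).eq_of_ae_eq (isMulOp_algebraMap c) (ae_of_all _ fun _ => rfl)
  map_star' _ := (isMulOp_mulOp _ _).isSelfAdjoint.symm

theorem isMulOp_mulStarAlgHom (φ : C(X, ℝ)) : IsMulOp (fun x => φ (r x)) (mulStarAlgHom hr φ) :=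
  isMulOp_mulOp _ _

theorem continuous_mulStarAlgHom : Continuous (mulStarAlgHom hr) :=
  AddMonoidHomClass.continuous_of_bound _ 1 fun φ => by
    rw [one_mul]
    exact (isMulOp_mulStarAlgHom hr φ).norm_le (norm_nonneg φ)
      (ae_of_all _ fun x => φ.norm_coe_le_norm (r x))

end MulStarAlgHom

theorem IsMulOp.cfc_eq {f : ℝ → ℝ} {Mf : L2 →L[ℂ] L2} (hMf : IsMulOp f Mf) (hf : Measurable f)
    {Φ : ℝ → ℝ} (hΦ : ContinuousOn Φ (spectrum ℝ Mf)) {MΦf : L2 →L[ℂ] L2}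
    (hMΦf : IsMulOp (fun x => Φ (f x)) MΦf) : cfc Φ Mf = MΦf := by
  have hne : (spectrum ℝ Mf).Nonempty := by
    rw [hMf.spectrum_eq_support hf, Measure.nonempty_support_iff, Ne,
      Measure.map_eq_zero_iff hf.aemeasurable]
    exact NeZero.ne _
  have hmem : ∀ᵐ x, f x ∈ spectrum ℝ Mf := by
    rw [hMf.spectrum_eq_support hf]
    exact ae_of_ae_map hf.aemeasurable Measure.support_mem_ae
  obtain ⟨r, hr, hrf⟩ :=
    exists_measurable_ae_eq_subtype hf (spectrum.isClosed Mf).measurableSet hne hmem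
  have hcfcHom : cfcHom hMf.isSelfAdjoint = mulStarAlgHom hr :=
    cfcHom_eq_of_continuous_of_map_id _ _ (continuous_mulStarAlgHom hr)
      ((isMulOp_mulStarAlgHom hr _).eq_of_ae_eq hMf hrf)
  rw [cfc_apply Φ Mf hMf.isSelfAdjoint hΦ]
  exact (DFunLike.congr_fun hcfcHom _).trans
    ((isMulOp_mulStarAlgHom hr _).eq_of_ae_eq hMΦf (hrf.mono fun _ hx => congrArg Φ hx))

theorem stmt13_general (f g : ℝ → ℝ) (hfmeas : Measurable f)
    (U : L2 ≃ₗᵢ[ℂ] L2)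
    (Mf Mg : L2 →L[ℂ] L2) (hMf : IsMulOp f Mf) (hMg : IsMulOp g Mg)
    (hpos : IsPosOp (commOp U Mf Mg))
    (I : Set ℝ)
    (hIrange : closure {c : ℝ | ∀ ε > 0,
        0 < MeasureTheory.volume (f ⁻¹' Set.Ioo (c - ε) (c + ε))} ⊆ I)
    (Φ : ℝ → ℝ) (hΦcont : ContinuousOn Φ I)
    (hΦmono : ∀ A B : L2 →L[ℂ] L2, IsSelfAdjoint A → IsSelfAdjoint B →
      spectrum ℝ A ⊆ I → spectrum ℝ B ⊆ I → IsPosOp (B - A) →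
      IsPosOp (cfc (instCFC := IsSelfAdjoint.instContinuousFunctionalCalculus) Φ B -
        cfc (instCFC := IsSelfAdjoint.instContinuousFunctionalCalculus) Φ A))
    (MΦf : L2 →L[ℂ] L2) (hMΦf : IsMulOp (fun x => Φ (f x)) MΦf) :
    IsPosOp (commOp U MΦf Mg) := by
  have hMf_sa := hMf.isSelfAdjoint
  have hspec : spectrum ℝ Mf ⊆ I := by
    rwa [essRange_eq_support hfmeas, Measure.isClosed_support.closure_eq,
      ← hMf.spectrum_eq_support hfmeas] at hIrange
  have hmono : OperatorMonotoneOn (L2 →L[ℂ] L2) Φ I := fun A B hA hB hsA hsB hAB => by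
    rw [← sub_nonneg, ← isPosOp_iff_nonneg] at hAB ⊢
    exact hΦmono A B hA hB hsA hsB hAB
  -- `conjF U T` is definitionally `e T`.
  let e := U.symm.conjStarAlgEquiv
  have hcfc : cfc Φ (e Mf) = e MΦf := by
    rw [← StarAlgHomClass.map_cfc e Φ Mf (hΦcont.mono hspec) (ha := hMf_sa)
      (hφa := hMf_sa.map e),
      hMf.cfc_eq hfmeas (hΦcont.mono hspec) hMΦf]
  rw [isPosOp_iff_nonneg] at hpos ⊢
  have key := commutator_cfc_nonneg_of_operatorMonotoneOn ⟨Mg, hMg.isSelfAdjoint⟩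
    (hMf_sa.map e) hpos (by rwa [StarAlgEquiv.spectrum_real_apply]) hΦcont hmono
  change 0 ≤ Complex.I • (e MΦf * Mg - Mg * e MΦf)
  -- `key` and `hcfc` elaborate `cfc` through different (defeq) instances, so `rw` cannot be used.
  convert key using 4 <;> exact hcfc.symm

/-- If `i[f(P), g(Q)] ≥ 0` and `Φ` is continuous and operator monotone on an open interval `I`
containing the closure of the essential range of `f`, then `i[(Φ∘f)(P), g(Q)] ≥ 0`. -/
theorem stmt13 (f g : ℝ → ℝ) (hfmeas : Measurable f) (hgmeas : Measurable g)
    (hfbdd : ∃ M, ∀ x, |f x| ≤ M) (hgbdd : ∃ M, ∀ x, |g x| ≤ M)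
    (U : L2 ≃ₗᵢ[ℂ] L2) (hU : IsFourierPlancherel U)
    (Mf Mg : L2 →L[ℂ] L2) (hMf : IsMulOp f Mf) (hMg : IsMulOp g Mg)
    (hpos : IsPosOp (commOp U Mf Mg))
    (I : Set ℝ) (hIopen : IsOpen I) (hIconn : I.OrdConnected)
    (hIrange : closure {c : ℝ | ∀ ε > 0,
        0 < MeasureTheory.volume (f ⁻¹' Set.Ioo (c - ε) (c + ε))} ⊆ I)
    (Φ : ℝ → ℝ) (hΦcont : ContinuousOn Φ I)
    (hΦmono : ∀ A B : L2 →L[ℂ] L2, IsSelfAdjoint A → IsSelfAdjoint B →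
      spectrum ℝ A ⊆ I → spectrum ℝ B ⊆ I → IsPosOp (B - A) →
      IsPosOp (cfc (instCFC := IsSelfAdjoint.instContinuousFunctionalCalculus) Φ B -
        cfc (instCFC := IsSelfAdjoint.instContinuousFunctionalCalculus) Φ A))
    (MΦf : L2 →L[ℂ] L2) (hMΦf : IsMulOp (fun x => Φ (f x)) MΦf) :
    IsPosOp (commOp U MΦf Mg) :=
  stmt13_general f g hfmeas U Mf Mg hMf hMg hpos I hIrange Φ hΦcont hΦmono MΦf hMΦf
end
end

section
/- Let a > 0 and let g : ℝ → ℝ be bounded and three times continuously differentiable with g′(x) > 0 for all x, and suppose the function ψ := (g′)^(−1/2) satisfies −ψ″(x) + a²·ψ(x) ≥ 0 for all x ∈ ℝ. Then: (i) |ψ′(x)| < a·ψ(x) for all x; (ii) g′(x₀) e^{−2a|x − x₀|} ≤ g′(x) ≤ g′(x₀) e^{2a|x − x₀|} for all x, x₀ ∈ ℝ; (iii) |g″(x)| ≤ 2a·g′(x) for all x; (iv) g′(x) ≤ 2a·(sup g − g(x)) and g′(x) ≤ 2a·(g(x) − inf g) for all x; (v) if g′ is an even function, then g′(x) ≥ g′(0)/cosh²(ax)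 for all x. -/
open Real Set

/-!
Since `ψ'' ≤ a²ψ`, Grönwall's inequality shows that once `ψ' + aψ ≤ 0` at some point it stays
so to the right; then `ψ` decreases, `g' = ψ⁻²` stays above a positive constant and `g` is
unbounded. Reflecting `x ↦ -x` gives the other inequality, hence `|ψ'| < aψ`, which is
`|g''| ≤ 2a g'` because `g'' = -2ψ'/ψ³`. Integrating `|(log g')'| ≤ 2a` gives the exponential
bounds. The bounds by `sup g` and `inf g` hold because `g' ± 2a g` is monotone while `g'`
becomes arbitrarily small at `±∞`. Finally, when `g'` is even, `ψ'(0) = 0` and `ψ` is compared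
with the solution `ψ(0) cosh(ax)` of `φ'' = a²φ` with the same Cauchy data at `0`.
-/

theorem HasDerivAt.comp_neg {f : ℝ → ℝ} {f' x : ℝ} (h : HasDerivAt f f' (-x)) :
    HasDerivAt (fun y => f (-y)) (-f') x := by
  have := h.comp x (hasDerivAt_neg x)
  rwa [mul_neg_one] at this

theorem nonpos_of_hasDerivAt_le_mul {u u' : ℝ → ℝ} {c x₀ : ℝ}
    (hu : ∀ x, HasDerivAt u (u' x) x) (hle : ∀ x, x₀ ≤ x → u' x ≤ c * u x) (h₀ : u x₀ ≤ 0)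
    (x : ℝ) (hx : x₀ ≤ x) : u x ≤ 0 := by
  have := le_gronwallBound_of_liminf_deriv_right_le (δ := 0) (ε := 0) (b := x)
    (fun y _ => (hu y).continuousAt.continuousWithinAt)
    (fun y _ _ hr => (hu y).hasDerivWithinAt.liminf_right_slope_le hr) h₀
    (fun y hy => by simpa using hle y hy.1) x ⟨hx, le_rfl⟩
  rwa [gronwallBound_ε0_δ0] at this

theorem exists_ge_deriv_lt_of_le {f f' : ℝ → ℝ} {M : ℝ}
    (hf : ∀ x, HasDerivAt f (f' x) x) (hM : ∀ x, f x ≤ M) (x : ℝ) {ε : ℝ} (hε : 0 < ε) :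
    ∃ y, x ≤ y ∧ f' y < ε := by
  by_contra! hge
  have hgrowth : ∀ y, x ≤ y → ε * (y - x) ≤ f y - f x :=
    fun y hy => (convex_Ici x).mul_sub_le_image_sub_of_le_deriv
      (fun z _ => (hf z).continuousAt.continuousWithinAt)
      (fun z _ => (hf z).differentiableAt.differentiableWithinAt)
      (fun z hz => (hf z).deriv ▸ hge z (interior_subset hz)) x self_mem_Ici y hy hy
  have hfar := hgrowth (x + (M - f x) / ε + 1)
    (by linarith [div_nonneg (sub_nonneg.2 (hM x)) hε.le])
  have hstep : ε * ((M - f x) / ε + 1) = M - f x + ε := by field_simp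
  linarith [hM (x + (M - f x) / ε + 1)]

theorem deriv_add_mul_nonpos_of_le_sq_mul {w w' w'' : ℝ → ℝ} {a x₀ : ℝ}
    (hw : ∀ x, HasDerivAt w (w' x) x) (hw' : ∀ x, HasDerivAt w' (w'' x) x)
    (hsub : ∀ x, x₀ ≤ x → w'' x ≤ a ^ 2 * w x) (h₀ : w' x₀ + a * w x₀ ≤ 0) :
    ∀ x, x₀ ≤ x → w' x + a * w x ≤ 0 :=
  nonpos_of_hasDerivAt_le_mul (c := a) (fun x => (hw' x).add ((hw x).const_mul a))
    (fun x hx => by linarith [hsub x hx]) h₀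

section Riccati

variable {a : ℝ} {g ψ ψ' ψ'' : ℝ → ℝ}

theorem neg_mul_lt_deriv_of_le_sq_mul {M : ℝ} (ha : 0 ≤ a)
    (hψ : ∀ x, HasDerivAt ψ (ψ' x) x) (hψ' : ∀ x, HasDerivAt ψ' (ψ'' x) x)
    (hpos : ∀ x, 0 < ψ x) (hsub : ∀ x, ψ'' x ≤ a ^ 2 * ψ x)
    (hg : ∀ x, HasDerivAt g ((ψ x ^ 2)⁻¹) x) (hM : ∀ x, g x ≤ M) (x₀ : ℝ) :
    -(a * ψ x₀) < ψ' x₀ := by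
  by_contra! h
  have hdecay : ∀ x, x₀ ≤ x → ψ' x + a * ψ x ≤ 0 :=
    deriv_add_mul_nonpos_of_le_sq_mul hψ hψ' (fun x _ => hsub x) (by linarith)
  have hanti : AntitoneOn ψ (Ici x₀) :=
    antitoneOn_of_hasDerivWithinAt_nonpos (convex_Ici x₀)
      (fun x _ => (hψ x).continuousAt.continuousWithinAt) (fun x _ => (hψ x).hasDerivWithinAt)
      (fun x hx => by
        linarith [hdecay x (interior_subset hx), mul_nonneg ha (hpos x).le])
  obtain ⟨y, hy, hlt⟩ := exists_ge_deriv_lt_of_le hg hM x₀ (inv_pos.2 (pow_pos (hpos x₀) 2))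
  have hgrow : (ψ x₀ ^ 2)⁻¹ ≤ (ψ y ^ 2)⁻¹ :=
    inv_anti₀ (pow_pos (hpos y) 2) (pow_le_pow_left₀ (hpos y).le (hanti self_mem_Ici hy hy) 2)
  linarith

theorem abs_deriv_lt_of_le_sq_mul {M m : ℝ} (ha : 0 ≤ a)
    (hψ : ∀ x, HasDerivAt ψ (ψ' x) x) (hψ' : ∀ x, HasDerivAt ψ' (ψ'' x) x)
    (hpos : ∀ x, 0 < ψ x) (hsub : ∀ x, ψ'' x ≤ a ^ 2 * ψ x)
    (hg : ∀ x, HasDerivAt g ((ψ x ^ 2)⁻¹) x) (hM : ∀ x, g x ≤ M) (hm : ∀ x, m ≤ g x) (x : ℝ) :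
    |ψ' x| < a * ψ x := by
  -- The hypotheses are invariant under `ψ ↦ ψ(-·)`, `g ↦ -g(-·)`, which swaps the two bounds.
  have := neg_mul_lt_deriv_of_le_sq_mul (g := fun y => -g (-y)) (ψ := fun y => ψ (-y))
    (ψ' := fun y => -ψ' (-y)) (ψ'' := fun y => ψ'' (-y)) (M := -m) ha
    (fun y => (hψ (-y)).comp_neg) (fun y => by simpa using (hψ' (-y)).comp_neg.fun_neg)
    (fun y => hpos _) (fun y => hsub _) (fun y => by simpa using (hg (-y)).comp_neg.fun_neg)
    (fun y => by linarith [hm (-y)]) (-x)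
  simp only [neg_neg] at this
  exact abs_lt.2 ⟨neg_mul_lt_deriv_of_le_sq_mul ha hψ hψ' hpos hsub hg hM x, by linarith⟩

theorem le_mul_cosh_of_le_sq_mul (hψ : ∀ x, HasDerivAt ψ (ψ' x) x)
    (hψ' : ∀ x, HasDerivAt ψ' (ψ'' x) x) (hsub : ∀ x, ψ'' x ≤ a ^ 2 * ψ x)
    (heven : ∀ x, ψ (-x) = ψ x) (x : ℝ) : ψ x ≤ ψ 0 * cosh (a * x) := by
  have h₀ : ψ' 0 = 0 := by
    have := (hψ 0).unique (by simpa [heven] using (hψ (-0)).comp_neg)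
    linarith
  have hlin : ∀ y, HasDerivAt (fun y => a * y) a y := fun y => by
    simpa using (hasDerivAt_id y).const_mul a
  have hw : ∀ y, HasDerivAt (fun y => ψ y - ψ 0 * cosh (a * y))
      (ψ' y - ψ 0 * (a * sinh (a * y))) y := fun y =>
    ((hψ y).sub (((hlin y).cosh).const_mul (ψ 0))).congr_deriv (by ring)
  have hw' : ∀ y, HasDerivAt (fun y => ψ' y - ψ 0 * (a * sinh (a * y)))
      (ψ'' y - ψ 0 * (a ^ 2 * cosh (a * y))) y := fun y =>
    ((hψ' y).sub ((((hlin y).sinh).const_mul a).const_mul (ψ 0))).congr_deriv (by ring)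
  -- `w = ψ - ψ 0 * cosh (a ·)` has `w'' ≤ a² w` and `w 0 = w' 0 = 0`:
  -- first `w' ≤ a w`, then `w ≤ 0`.
  have hright : ∀ y, 0 ≤ y → ψ y ≤ ψ 0 * cosh (a * y) := by
    have hslope := deriv_add_mul_nonpos_of_le_sq_mul (a := -a) (x₀ := 0) hw hw'
      (fun y _ => by linarith [hsub y]) (by simp [h₀])
    intro y hy
    have := nonpos_of_hasDerivAt_le_mul hw (c := a) (fun z hz => by linarith [hslope z hz])
      (by simp) y hy
    linarith
  rcases le_total 0 x with hx | hx
  · exact hright x hx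
  · simpa [heven, mul_neg] using hright (-x) (by linarith)

end Riccati

theorem mul_exp_neg_le_and_le_mul_exp_of_abs_deriv_le {f f' : ℝ → ℝ} {C : ℝ}
    (hf : ∀ x, HasDerivAt f (f' x) x) (hpos : ∀ x, 0 < f x) (hle : ∀ x, |f' x| ≤ C * f x)
    (x y : ℝ) : f y * exp (-(C * |x - y|)) ≤ f x ∧ f x ≤ f y * exp (C * |x - y|) := by
  have hlip : |log (f x) - log (f y)| ≤ C * |x - y| := by
    simpa using (convex_univ : Convex ℝ (univ : Set ℝ)).norm_image_sub_le_of_norm_hasDerivWithin_le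
      (f := fun z => log (f z)) (C := C)
      (fun z _ => ((hf z).log (hpos z).ne').hasDerivWithinAt)
      (fun z _ => by
        rw [norm_div, Real.norm_eq_abs, Real.norm_eq_abs, abs_of_pos (hpos z),
          div_le_iff₀ (hpos z)]
        exact hle z) (mem_univ y) (mem_univ x)
  obtain ⟨hlow, hup⟩ := abs_le.1 hlip
  constructor
  · calc f y * exp (-(C * |x - y|)) = exp (log (f y) - C * |x - y|) := by
          rw [exp_sub, exp_log (hpos y), exp_neg, div_eq_mul_inv]
      _ ≤ exp (log (f x)) := exp_le_exp.2 (by linarith)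
      _ = f x := exp_log (hpos x)
  · calc f x = exp (log (f x)) := (exp_log (hpos x)).symm
      _ ≤ exp (log (f y) + C * |x - y|) := exp_le_exp.2 (by linarith)
      _ = f y * exp (C * |x - y|) := by rw [exp_add, exp_log (hpos y)]

section SupInf

variable {f f' f'' : ℝ → ℝ} {c : ℝ}

theorem deriv_le_mul_sub_of_le {M : ℝ} (hf : ∀ x, HasDerivAt f (f' x) x)
    (hf' : ∀ x, HasDerivAt f' (f'' x) x) (hc : 0 ≤ c) (hf'' : ∀ x, -(c * f' x) ≤ f'' x)
    (hM : ∀ x, f x ≤ M) (x : ℝ) : f' x ≤ c * (M - f x) := by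
  have hmono : Monotone fun y => f' y + c * f y :=
    monotone_of_hasDerivAt_nonneg (fun y => (hf' y).add ((hf y).const_mul c))
      (fun y => by simp only [Pi.zero_apply]; linarith [hf'' y])
  refine le_of_forall_pos_lt_add fun ε hε => ?_
  obtain ⟨y, hxy, hy⟩ := exists_ge_deriv_lt_of_le hf hM x hε
  linarith [hmono hxy, mul_le_mul_of_nonneg_left (hM y) hc]

theorem deriv_le_mul_sub_of_ge {m : ℝ} (hf : ∀ x, HasDerivAt f (f' x) x)
    (hf' : ∀ x, HasDerivAt f' (f'' x) x) (hc : 0 ≤ c) (hf'' : ∀ x, f'' x ≤ c * f' x)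
    (hm : ∀ x, m ≤ f x) (x : ℝ) : f' x ≤ c * (f x - m) := by
  have := deriv_le_mul_sub_of_le (f := fun y => -f (-y)) (f' := fun y => f' (-y))
    (f'' := fun y => -f'' (-y)) (M := -m) (fun y => by simpa using (hf (-y)).comp_neg.fun_neg)
    (fun y => (hf' (-y)).comp_neg) hc (fun y => by linarith [hf'' (-y)])
    (fun y => by linarith [hm (-y)]) (-x)
  simp only [neg_neg] at this
  linarith

end SupInf

theorem ContDiff.inv_sqrt {n : WithTop ℕ∞} {f : ℝ → ℝ} (hf : ContDiff ℝ n f)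
    (hpos : ∀ x, 0 < f x) : ContDiff ℝ n fun x => (√(f x))⁻¹ :=
  (hf.sqrt fun x => (hpos x).ne').inv fun x => (sqrt_pos.2 (hpos x)).ne'

theorem hasDerivAt_inv_sq {ψ : ℝ → ℝ} {ψ' x : ℝ} (h : HasDerivAt ψ ψ' x) (hx : ψ x ≠ 0) :
    HasDerivAt (fun y => (ψ y ^ 2)⁻¹) (-2 * ψ' / ψ x ^ 3) x := by
  refine ((h.fun_pow 2).inv (pow_ne_zero 2 hx)).congr_deriv ?_
  field_simp
  ring

theorem abs_neg_two_mul_div_pow_three_le {p p' a : ℝ} (hp : 0 < p) (h : |p'| ≤ a * p) :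
    |-2 * p' / p ^ 3| ≤ 2 * a * (p ^ 2)⁻¹ := by
  rw [abs_div, abs_mul, abs_of_pos (pow_pos hp 3), div_le_iff₀ (pow_pos hp 3)]
  calc |(-2 : ℝ)| * |p'| ≤ 2 * (a * p) := by norm_num; linarith
    _ = 2 * a * (p ^ 2)⁻¹ * p ^ 3 := by field_simp

/-- Riccati-type consequences: if `g` is bounded with `g′ > 0` and `ψ = (g′)^{-1/2}` satisfies
`−ψ″ + a²ψ ≥ 0`, then `|ψ′| < aψ`, the two-sided exponential bounds on `g′`, `|g″| ≤ 2a g′`,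
`g′ ≤ 2a (sup g − g)`, `g′ ≤ 2a (g − inf g)`, and the `cosh⁻²` lower bound when `g′` is even. -/
theorem stmt18 (a : ℝ) (ha : 0 < a) (g : ℝ → ℝ) (hgbdd : ∃ M, ∀ x, |g x| ≤ M)
    (hgsmooth : ContDiff ℝ 3 g) (hg' : ∀ x, 0 < deriv g x)
    (ψ : ℝ → ℝ) (hψ : ψ = fun x => (Real.sqrt (deriv g x))⁻¹)
    (hineq : ∀ x : ℝ, 0 ≤ -(deriv (deriv ψ) x) + a ^ 2 * ψ x) :
    (∀ x : ℝ, |deriv ψ x| < a * ψ x) ∧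
    (∀ x x₀ : ℝ, deriv g x₀ * Real.exp (-(2 * a * |x - x₀|)) ≤ deriv g x ∧
      deriv g x ≤ deriv g x₀ * Real.exp (2 * a * |x - x₀|)) ∧
    (∀ x : ℝ, |deriv (deriv g) x| ≤ 2 * a * deriv g x) ∧
    (∀ x : ℝ, deriv g x ≤ 2 * a * (sSup (Set.range g) - g x) ∧
      deriv g x ≤ 2 * a * (g x - sInf (Set.range g))) ∧
    ((∀ x : ℝ, deriv g (-x) = deriv g x) →
      ∀ x : ℝ, deriv g 0 / (Real.cosh (a * x)) ^ 2 ≤ deriv g x) := by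
  obtain ⟨M, hM⟩ := hgbdd
  have hle : ∀ x, g x ≤ M := fun x => (abs_le.1 (hM x)).2
  have hge : ∀ x, -M ≤ g x := fun x => (abs_le.1 (hM x)).1
  have hpos : ∀ x, 0 < ψ x := fun x => hψ ▸ inv_pos.2 (sqrt_pos.2 (hg' x))
  have hg'_eq : deriv g = fun x => (ψ x ^ 2)⁻¹ := by
    funext x; rw [hψ, inv_pow, inv_inv, sq_sqrt (hg' x).le]
  have hψC2 : ContDiff ℝ 2 ψ := hψ ▸ (hgsmooth.deriv' : ContDiff ℝ 2 (deriv g)).inv_sqrt hg'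
  have hψ1 : ∀ x, HasDerivAt ψ (deriv ψ x) x :=
    fun x => (hψC2.differentiable two_ne_zero x).hasDerivAt
  have hψ2 : ∀ x, HasDerivAt (deriv ψ) (deriv (deriv ψ) x) x :=
    fun x => ((hψC2.deriv' : ContDiff ℝ 1 (deriv ψ)).differentiable one_ne_zero x).hasDerivAt
  have hsub : ∀ x, deriv (deriv ψ) x ≤ a ^ 2 * ψ x := fun x => by linarith [hineq x]
  have hg1 : ∀ x, HasDerivAt g (deriv g x) x :=
    fun x => (hgsmooth.differentiable (by norm_num) x).hasDerivAt
  have hg'' : ∀ x, HasDerivAt (deriv g) (-2 * deriv ψ x / ψ x ^ 3) x :=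
    fun x => hg'_eq ▸ hasDerivAt_inv_sq (hψ1 x) (hpos x).ne'
  have hg2 : ∀ x, HasDerivAt (deriv g) (deriv (deriv g) x) x :=
    fun x => (hg'' x).differentiableAt.hasDerivAt
  have part1 : ∀ x, |deriv ψ x| < a * ψ x :=
    abs_deriv_lt_of_le_sq_mul ha.le hψ1 hψ2 hpos hsub
      (fun x => (hg1 x).congr_deriv (congrFun hg'_eq x)) hle hge
  have part3 : ∀ x, |deriv (deriv g) x| ≤ 2 * a * deriv g x := fun x => by
    rw [(hg'' x).deriv, hg'_eq]
    exact abs_neg_two_mul_div_pow_three_le (hpos x) (part1 x).le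
  refine ⟨part1, mul_exp_neg_le_and_le_mul_exp_of_abs_deriv_le hg2 hg' part3, part3,
    fun x => ⟨?_, ?_⟩, fun heven x => ?_⟩
  · exact deriv_le_mul_sub_of_le hg1 hg2 (by positivity) (fun y => (abs_le.1 (part3 y)).1)
      (fun y => le_csSup (⟨M, forall_mem_range.2 hle⟩ : BddAbove (range g)) ⟨y, rfl⟩) x
  · exact deriv_le_mul_sub_of_ge hg1 hg2 (by positivity) (fun y => (abs_le.1 (part3 y)).2)
      (fun y => csInf_le (⟨-M, forall_mem_range.2 hge⟩ : BddBelow (range g)) ⟨y, rfl⟩) x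
  · have hcosh := le_mul_cosh_of_le_sq_mul hψ1 hψ2 hsub (fun y => by simp [hψ, heven y]) x
    rw [hg'_eq, div_eq_mul_inv, ← mul_inv, ← mul_pow]
    exact inv_anti₀ (pow_pos (hpos x) 2) (pow_le_pow_left₀ (hpos x).le hcosh 2)
end
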